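/- Let 1 ≤ d < n − 1 and let N_δ denote the (d,n)-Nikodym maximal operator, N_δ f(x) = sup_{σ ∈ Gr(d,n)} |x + T_δ(σ)|^{−1} ∫_{x+T_δ(σ)} |f|. Then there is a constant c(d,n) > 0 and for every small δ > 0 a function f_δ ∈ L²(ℝⁿ) with ‖N_δ f_δ‖_{L^{2,∞}(ℝⁿ)} ≥ c(d,n) δ^{−(n−d−1)/2} ‖f_δ‖_{L²(ℝⁿ)}; i.e. the weak (2,2) norm of N_δ is at least c δ^{−(n−d−1)/2}. -/

import Mathlib

open MeasureTheory Submodule ENNReal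

noncomputable def projE {n : ℕ} (σ : Submodule ℝ (EuclideanSpace ℝ (Fin n))) :
    EuclideanSpace ℝ (Fin n) →L[ℝ] EuclideanSpace ℝ (Fin n) :=
  σ.subtypeL.comp (orthogonalProjection σ)

/-- The δ-plate oriented along the subspace σ. -/
def plate {n : ℕ} (σ : Submodule ℝ (EuclideanSpace ℝ (Fin n))) (δ : ℝ) :
    Set (EuclideanSpace ℝ (Fin n)) :=
  {x | ‖projE σ x‖ ≤ 1 ∧ ‖projE σᗮ x‖ < δ}

/-- The `(d,n)`-Nikodym maximal operator: the supremum over all `d`-dimensional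
subspaces of the averages of `f` over the translated δ-plate `x + T_δ(σ)`. -/
noncomputable def nikMax {n : ℕ} (d : ℕ) (δ : ℝ)
    (f : EuclideanSpace ℝ (Fin n) → ℝ≥0∞) (x : EuclideanSpace ℝ (Fin n)) : ℝ≥0∞ :=
  ⨆ σ ∈ {σ : Submodule ℝ (EuclideanSpace ℝ (Fin n)) | Module.finrank ℝ σ = d},
    (volume ((x + ·) '' plate σ δ))⁻¹ * ∫⁻ y in (x + ·) '' plate σ δ, f y

/-- The `L²(ℝⁿ)` norm of an `ℝ≥0∞`-valued function. -/
noncomputable def l2N {n : ℕ} (g : EuclideanSpace ℝ (Fin n) → ℝ≥0∞) : ℝ≥0∞ :=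
  (∫⁻ x, g x ^ (2 : ℝ)) ^ ((1 : ℝ) / 2)

namespace NikAux

variable {n : ℕ}

local notation "V" => EuclideanSpace ℝ (Fin n)

local notation "⟪" x ", " y "⟫" => inner (𝕜 := ℝ) x y

lemma projE_apply (σ : Submodule ℝ V) (p : V) :
    projE σ p = (orthogonalProjection σ p : V) := rfl

lemma projE_mem (σ : Submodule ℝ V) (p : V) : projE σ p ∈ σ := by
  rw [projE_apply]; exact (orthogonalProjection σ p).2

lemma projE_of_mem (σ : Submodule ℝ V) {p : V} (hp : p ∈ σ) : projE σ p = p := by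
  rw [projE_apply]; exact starProjection_eq_self_iff.2 hp

lemma projE_orth_apply (σ : Submodule ℝ V) (p : V) :
    projE σᗮ p = p - projE σ p := by
  rw [projE_apply]; exact starProjection_orthogonal_val (K := σ) p

lemma projE_orth_of_mem (σ : Submodule ℝ V) {p : V} (hp : p ∈ σ) : projE σᗮ p = 0 := by
  rw [projE_orth_apply, projE_of_mem σ hp, sub_self]

lemma norm_projE_le (σ : Submodule ℝ V) (p : V) : ‖projE σ p‖ ≤ ‖p‖ := by
  rw [projE_apply]
  have := orthogonalProjection_norm_le σ
  calc ‖(orthogonalProjection σ p : V)‖ = ‖orthogonalProjection σ p‖ := rfl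
    _ ≤ ‖orthogonalProjection σ‖ * ‖p‖ := (orthogonalProjection σ).le_opNorm p
    _ ≤ 1 * ‖p‖ := by gcongr
    _ = ‖p‖ := one_mul _

lemma coord_le_norm (x : V) (i : Fin n) : |x i| ≤ ‖x‖ := by
  rw [EuclideanSpace.norm_eq]
  have h1 : |x i| = Real.sqrt (‖x i‖ ^ 2) := by
    rw [Real.norm_eq_abs, sq_abs, Real.sqrt_sq_eq_abs]
  rw [h1]
  apply Real.sqrt_le_sqrt
  exact Finset.single_le_sum (f := fun j => ‖x j‖ ^ 2) (fun j _ => by positivity)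
    (Finset.mem_univ i)

lemma sq_norm_eq (x : V) : ‖x‖ ^ 2 = ∑ i, (x i) ^ 2 := by
  rw [EuclideanSpace.norm_eq, Real.sq_sqrt (by positivity)]
  congr 1; ext i; rw [Real.norm_eq_abs, sq_abs]

/-- The coordinate subspace spanned by the first `m` standard basis vectors. -/
noncomputable def Wsub (n m : ℕ) (h : m ≤ n) : Submodule ℝ (EuclideanSpace ℝ (Fin n)) :=
  span ℝ (Set.range fun i : Fin m => EuclideanSpace.single (Fin.castLE h i) (1 : ℝ))

lemma orthonormal_castLE (m : ℕ) (h : m ≤ n) :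
    Orthonormal ℝ (fun i : Fin m => EuclideanSpace.single (Fin.castLE h i) (1 : ℝ)) := by
  have h0 : Orthonormal ℝ (fun i : Fin n => EuclideanSpace.single i (1 : ℝ)) := by
    have := (EuclideanSpace.basisFun (Fin n) ℝ).orthonormal
    have e : ⇑(EuclideanSpace.basisFun (Fin n) ℝ) = fun i => EuclideanSpace.single i (1:ℝ) := by
      funext i
      rw [EuclideanSpace.basisFun_apply]
    rw [e] at this; exact this
  exact h0.comp _ (Fin.castLE_injective h)

lemma finrank_Wsub (m : ℕ) (h : m ≤ n) : Module.finrank ℝ (Wsub n m h) = m := by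
  rw [Wsub, finrank_span_eq_card ((orthonormal_castLE m h).linearIndependent)]
  simp

lemma single_mem_Wsub (m : ℕ) (h : m ≤ n) (i : Fin n) (hi : i.val < m) (c : ℝ) :
    EuclideanSpace.single i c ∈ Wsub n m h := by
  have h1 : EuclideanSpace.single i c = c • EuclideanSpace.single i (1 : ℝ) := by
    ext j; simp [EuclideanSpace.single_apply]
  rw [h1]
  apply smul_mem
  apply subset_span
  exact ⟨⟨i.1, hi⟩, by congr⟩

lemma coord_eq_zero_of_mem_Wsub (m : ℕ) (h : m ≤ n) {x : V} (hx : x ∈ Wsub n m h)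
    (i : Fin n) (hi : m ≤ i.val) : x i = 0 := by
  induction hx using span_induction with
  | mem y hy =>
    obtain ⟨j, rfl⟩ := hy
    show EuclideanSpace.single (Fin.castLE h j) (1:ℝ) i = 0
    rw [EuclideanSpace.single_apply, if_neg]
    intro hne
    rw [hne] at hi
    exact absurd hi (by simpa using j.2)
  | zero => rfl
  | add y z _ _ hy hz => show y i + z i = 0; rw [hy, hz, add_zero]
  | smul c y _ hy => show c * y i = 0; rw [hy, mul_zero]

/-- The coordinate mask: zero out coordinates `≥ m`. -/
noncomputable def maskLow (m : ℕ) (x : EuclideanSpace ℝ (Fin n)) : EuclideanSpace ℝ (Fin n) :=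
  WithLp.toLp 2 (fun i => if i.val < m then x i else 0)

lemma eucl_eq_sum (y : V) : y = ∑ i, EuclideanSpace.single i (y i) := by
  ext j
  rw [WithLp.ofLp_sum, Fintype.sum_apply]
  simp [EuclideanSpace.single_apply]

lemma maskLow_mem (m : ℕ) (h : m ≤ n) (x : V) : maskLow m x ∈ Wsub n m h := by
  rw [eucl_eq_sum (maskLow m x)]
  apply sum_mem
  intro i _
  by_cases hi : i.val < m
  · exact single_mem_Wsub m h i hi _
  · have : maskLow m x i = 0 := if_neg hi
    rw [this]
    have : EuclideanSpace.single i (0:ℝ) = 0 := by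
      ext j; simp [EuclideanSpace.single_apply]
    rw [this]; exact zero_mem _

lemma projE_Wsub (m : ℕ) (h : m ≤ n) (p : V) :
    projE (Wsub n m h) p = maskLow m p := by
  rw [projE_apply]
  apply eq_starProjection_of_mem_orthogonal (maskLow_mem m h p)
  rw [Submodule.mem_orthogonal]
  intro u hu
  rw [PiLp.inner_apply]
  apply Finset.sum_eq_zero
  intro i _
  by_cases hi : i.val < m
  · have h2 : (p - maskLow m p) i = p i - maskLow m p i := rfl
    have h3 : maskLow m p i = p i := if_pos hi
    simp [h2, h3]
  · have hu0 : u i = 0 := coord_eq_zero_of_mem_Wsub m h hu i (le_of_not_gt hi)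
    simp [hu0]

lemma projE_Wsub_orth (m : ℕ) (h : m ≤ n) (p : V) :
    projE (Wsub n m h)ᗮ p = p - maskLow m p := by
  rw [projE_orth_apply, projE_Wsub]

end NikAux

namespace NikAux

variable {n : ℕ}

local notation "V" => EuclideanSpace ℝ (Fin n)
local notation "⟪" x ", " y "⟫" => inner (𝕜 := ℝ) x y

lemma projE_map (O : V ≃ₗᵢ[ℝ] V) (W : Submodule ℝ V) (p : V) :
    projE (W.map (O.toLinearEquiv : V →ₗ[ℝ] V)) (O p) = O (projE W p) := by
  rw [projE_apply]
  apply eq_starProjection_of_mem_orthogonal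
  · exact ⟨projE W p, projE_mem W p, rfl⟩
  · rw [Submodule.mem_orthogonal]
    rintro u ⟨w, hw, rfl⟩
    have h1 : O p - O (projE W p) = O (p - projE W p) := by rw [map_sub]
    have h2 : (O.toLinearEquiv : V →ₗ[ℝ] V) w = O w := rfl
    rw [h1, h2, O.inner_map_map]
    have h3 : p - projE W p ∈ Wᗮ := by
      rw [projE_apply]
      exact sub_starProjection_mem_orthogonal p
    exact (Submodule.mem_orthogonal _ _).1 h3 w hw

lemma mem_plate_map_iff (O : V ≃ₗᵢ[ℝ] V) (W : Submodule ℝ V) (δ : ℝ) (p : V) :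
    O p ∈ plate (W.map (O.toLinearEquiv : V →ₗ[ℝ] V)) δ ↔ p ∈ plate W δ := by
  have h1 : projE (W.map (O.toLinearEquiv : V →ₗ[ℝ] V)) (O p) = O (projE W p) :=
    projE_map O W p
  have h2 : projE (W.map (O.toLinearEquiv : V →ₗ[ℝ] V))ᗮ (O p) = O (projE Wᗮ p) := by
    rw [projE_orth_apply, h1, ← map_sub, projE_orth_apply]
  constructor
  · rintro ⟨ha, hb⟩
    rw [h1, O.norm_map] at ha
    rw [h2, O.norm_map] at hb
    exact ⟨ha, hb⟩
  · rintro ⟨ha, hb⟩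
    exact ⟨by rw [h1, O.norm_map]; exact ha, by rw [h2, O.norm_map]; exact hb⟩

lemma plate_map_eq (O : V ≃ₗᵢ[ℝ] V) (W : Submodule ℝ V) (δ : ℝ) :
    plate (W.map (O.toLinearEquiv : V →ₗ[ℝ] V)) δ = ⇑O.symm ⁻¹' plate W δ := by
  ext q
  have := mem_plate_map_iff O W δ (O.symm q)
  rw [O.apply_symm_apply] at this
  rw [this]
  rfl

lemma measurableSet_plate (W : Submodule ℝ V) (δ : ℝ) : MeasurableSet (plate W δ) := by
  have h1 : MeasurableSet {x : V | ‖projE W x‖ ≤ 1} :=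
    measurableSet_le ((projE W).continuous.norm.measurable) measurable_const
  have h2 : MeasurableSet {x : V | ‖projE Wᗮ x‖ < δ} :=
    measurableSet_lt ((projE Wᗮ).continuous.norm.measurable) measurable_const
  exact h1.inter h2

/-- boxes -/
def box (I : (Fin n) → Set ℝ) : Set (EuclideanSpace ℝ (Fin n)) := {x | ∀ i, x i ∈ I i}

lemma box_eq_preimage (I : Fin n → Set ℝ) :
    box I = (MeasurableEquiv.toLp 2 (Fin n → ℝ)).symm ⁻¹' (Set.univ.pi I) := by
  ext x
  simp only [box, Set.mem_preimage, Set.mem_pi, Set.mem_univ, true_implies, Set.mem_setOf_eq]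
  rfl

lemma measurableSet_box (I : Fin n → Set ℝ) (hI : ∀ i, MeasurableSet (I i)) :
    MeasurableSet (box I) := by
  rw [box_eq_preimage]
  exact (MeasurableEquiv.toLp 2 (Fin n → ℝ)).symm.measurable (MeasurableSet.univ_pi hI)

lemma volume_box (I : Fin n → Set ℝ) (hI : ∀ i, MeasurableSet (I i)) :
    volume (box I) = ∏ i, volume (I i) := by
  rw [box_eq_preimage,
    (EuclideanSpace.volume_preserving_symm_measurableEquiv_toLp (Fin n)).measure_preimage
      (MeasurableSet.univ_pi hI).nullMeasurableSet]
  exact volume_pi_pi I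

lemma card_filter_lt (m : ℕ) (hm : m ≤ n) :
    (Finset.univ.filter fun i : Fin n => i.val < m).card = m := by
  have : (Finset.univ.filter fun i : Fin n => i.val < m) =
      Finset.map ⟨fun j : Fin m => Fin.castLE hm j, Fin.castLE_injective hm⟩ Finset.univ := by
    ext i
    simp only [Finset.mem_filter, Finset.mem_univ, true_and, Finset.mem_map,
      Function.Embedding.coeFn_mk]
    constructor
    · intro h; exact ⟨⟨i.1, h⟩, rfl⟩
    · rintro ⟨j, rfl⟩; simpa using j.2
  rw [this, Finset.card_map, Finset.card_univ, Fintype.card_fin]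

lemma prod_ite_pow {M : Type*} [CommMonoid M] (a b : M) (m : ℕ) (hm : m ≤ n) :
    (∏ i : Fin n, if i.val < m then a else b) = a ^ m * b ^ (n - m) := by
  rw [Finset.prod_ite, Finset.prod_const, Finset.prod_const, card_filter_lt m hm]
  congr 2
  have h1 := Finset.card_filter_add_card_filter_not
    (s := (Finset.univ : Finset (Fin n))) (p := fun i : Fin n => i.val < m)
  rw [card_filter_lt m hm] at h1
  simp only [Finset.card_univ, Fintype.card_fin] at h1
  omega

lemma sum_ite_le {x : V} {a : ℝ} (m : ℕ) (hm : m ≤ n) (ha : 0 ≤ a)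
    (hx : ∀ i : Fin n, i.val < m → |x i| ≤ a) :
    ∑ i, (if (i : Fin n).val < m then x i else 0) ^ 2 ≤ m * a ^ 2 := by
  have h1 : ∀ i : Fin n, (if i.val < m then x i else 0) ^ 2
      ≤ (if i.val < m then a ^ 2 else 0) := by
    intro i
    by_cases hi : i.val < m
    · simp only [if_pos hi]
      rw [← sq_abs]
      exact pow_le_pow_left₀ (abs_nonneg _) (hx i hi) 2
    · simp [if_neg hi]
  calc ∑ i, (if (i : Fin n).val < m then x i else 0) ^ 2
      ≤ ∑ i : Fin n, (if i.val < m then a ^ 2 else 0) := Finset.sum_le_sum fun i _ => h1 i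
    _ = m * a ^ 2 := by
        rw [Finset.sum_ite, Finset.sum_const, Finset.sum_const, card_filter_lt m hm]
        simp

end NikAux


namespace NikAux

variable {n : ℕ}
local notation "V" => EuclideanSpace ℝ (Fin n)
local notation "⟪" x ", " y "⟫" => inner (𝕜 := ℝ) x y

lemma single_smul_one (i : Fin n) (c : ℝ) :
    EuclideanSpace.single i c = c • EuclideanSpace.single i (1:ℝ) := by
  ext j; simp [EuclideanSpace.single_apply]

set_option maxHeartbeats 2000000 in
lemma key (n d : ℕ) (hd : 1 ≤ d) (hdn : d + 1 < n) (hd1n : d - 1 ≤ n) (δ : ℝ) (hδ0 : 0 < δ)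
    (hδ1 : δ ≤ 1/(2*(n:ℝ)))
    (A : Set (EuclideanSpace ℝ (Fin n)))
    (hA : A = {p : EuclideanSpace ℝ (Fin n) | ‖projE (Wsub n (d-1) hd1n) p‖ ≤ 2
        ∧ ‖projE (Wsub n (d-1) hd1n)ᗮ p‖ < 2*δ})
    (hAmeas : MeasurableSet A)
    (x : EuclideanSpace ℝ (Fin n)) (hxb : ‖x‖ < 1/2)
    (hxY : x ∉ (Wsub n (d-1) hd1n : Set (EuclideanSpace ℝ (Fin n)))) :
    ENNReal.ofReal ((((1:ℝ)/d)^(d-1) * ((1:ℝ)/(2*(n:ℝ)))^(n-d+1)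
        / ((2:ℝ)^d * 2^(n-d))) * δ)
      ≤ nikMax d δ (A.indicator fun _ => (1:ℝ≥0∞)) x := by
  have hdn'' : d ≤ n := by omega
  have hn1 : (1:ℝ) ≤ (n:ℝ) := by exact_mod_cast Nat.one_le_iff_ne_zero.2 (by omega)
  have hd1 : (1:ℝ) ≤ (d:ℝ) := by exact_mod_cast hd
  have hδhalf : δ ≤ 1/2 := le_trans hδ1 (by rw [div_le_div_iff₀ (by linarith) (by norm_num)]; linarith)
  set Y := Wsub n (d-1) hd1n with hYdef
  have hjdlt : d - 1 < n := by omega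
  set jd : Fin n := ⟨d-1, hjdlt⟩ with hjddef
  -- step 1 : the orthogonal part of x
  set yv := x - maskLow (d-1) x with hyvdef
  have hyv : projE Yᗮ x = yv := projE_Wsub_orth (d-1) hd1n x
  have hyvm : yv ∈ Yᗮ := by rw [← hyv]; exact projE_mem _ _
  have hyvne : yv ≠ 0 := by
    intro h
    apply hxY
    have hx' : x = maskLow (d-1) x := by
      have := sub_eq_zero.1 h; exact this
    rw [hx']
    exact maskLow_mem (d-1) hd1n x
  set r : ℝ := ‖yv‖ with hrdef
  have hr : 0 < r := norm_pos_iff.2 hyvne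
  have hr2 : r < 1/2 := by
    have h1 : r ≤ ‖x‖ := by rw [hrdef, ← hyv]; exact norm_projE_le _ _
    linarith
  -- step 2 : the unit vector pointing from x to the disk
  set vv := (-r⁻¹) • yv with hvvdef
  have hvnorm : ‖vv‖ = 1 := by
    rw [hvvdef, norm_smul, norm_neg, norm_inv, Real.norm_eq_abs, abs_of_pos hr,
      ← hrdef, inv_mul_cancel₀ hr.ne']
  have hvmem : vv ∈ Yᗮ := smul_mem _ _ hyvm
  have hyveq : (-r) • vv = yv := by
    rw [hvvdef, smul_smul]
    have : (-r) * (-r⁻¹) = 1 := by field_simp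
    rw [this, one_smul]
  have hvcoord : ∀ i : Fin n, i.val < d - 1 → vv i = 0 := by
    intro i hi
    have h1 : yv i = 0 := by
      show x i - maskLow (d-1) x i = 0
      show x i - (if i.val < d-1 then x i else 0) = 0
      rw [if_pos hi, sub_self]
    show (-r⁻¹) * yv i = 0
    rw [h1, mul_zero]
  -- step 3 : the orthonormal family
  set g := fun i : Fin n => if i.val < d - 1 then EuclideanSpace.single i (1:ℝ) else vv
    with hgdef
  have horth : Orthonormal ℝ (({i : Fin n | i.val < d}).restrict g) := by
    rw [orthonormal_iff_ite]
    rintro ⟨i, hi⟩ ⟨j, hj⟩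
    by_cases hij : i = j
    · subst hij
      rw [if_pos rfl]
      show ⟪g i, g i⟫ = 1
      by_cases h1 : i.val < d - 1
      · rw [hgdef]
        simp only [if_pos h1]
        rw [EuclideanSpace.inner_single_left]
        simp [EuclideanSpace.single_apply]
      · rw [hgdef]
        simp only [if_neg h1]
        rw [real_inner_self_eq_norm_sq, hvnorm]; norm_num
    · rw [if_neg (by intro h; exact hij (congrArg Subtype.val h))]
      show ⟪g i, g j⟫ = 0
      by_cases h1 : i.val < d - 1 <;> by_cases h2 : j.val < d - 1
      · rw [hgdef]
        simp only [if_pos h1, if_pos h2]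
        rw [EuclideanSpace.inner_single_left]
        simp only [map_one, one_mul, EuclideanSpace.single_apply]
        rw [if_neg (by intro h; exact hij (Fin.ext (by rw [h])))]
      · rw [hgdef]
        simp only [if_pos h1, if_neg h2]
        rw [EuclideanSpace.inner_single_left]
        simp only [map_one, one_mul]
        exact hvcoord i h1
      · rw [hgdef]
        simp only [if_neg h1, if_pos h2]
        rw [real_inner_comm, EuclideanSpace.inner_single_left]
        simp only [map_one, one_mul]
        exact hvcoord j h2
      · exact absurd (Fin.ext (by
          have hi' : i.val < d := hi
          have hj' : j.val < d := hj
          omega)) hij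
  obtain ⟨b, hb⟩ := horth.exists_orthonormalBasis_extension_of_card_eq
    (by simp [finrank_euclideanSpace_fin])
  have hbi : ∀ i : Fin n, i.val < d - 1 → b i = EuclideanSpace.single i (1:ℝ) := by
    intro i hi
    have h1 := hb i (show i.val < d by omega)
    rw [h1, hgdef]; exact if_pos hi
  have hbjd : b jd = vv := by
    have h1 := hb jd (show jd.val < d by show d - 1 < d; omega)
    rw [h1, hgdef]
    exact if_neg (by show ¬ (jd.val < d - 1); show ¬ (d-1 < d-1); omega)
  -- step 4 : the isometry and the subspace
  set O := b.repr.symm with hOdef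
  have hO : ∀ ξ : EuclideanSpace ℝ (Fin n), O ξ = ∑ i, ξ i • b i := fun ξ => (b.sum_repr_symm ξ).symm
  set K := Wsub n d hdn'' with hKdef
  set σx := K.map (O.toLinearEquiv : EuclideanSpace ℝ (Fin n) →ₗ[ℝ] EuclideanSpace ℝ (Fin n)) with hσdef
  have hσrank : Module.finrank ℝ σx = d := by
    rw [hσdef, LinearEquiv.finrank_map_eq]; exact finrank_Wsub d hdn''
  have hδne : δ ≠ 0 := hδ0.ne'
  have hδdiv2 : δ/(2*(n:ℝ)) ≤ δ := by
    rw [div_le_iff₀ (by linarith)]; nlinarith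
  have hδdiv2pos : 0 ≤ δ/(2*(n:ℝ)) := by positivity
  -- step 5 : the box Q₀
  set aa : Fin n → ℝ := fun i => if i.val < d then r - δ/(2*(n:ℝ)) else -(δ/(4*(n:ℝ)))
    with haadef
  set Iq : Fin n → Set ℝ := fun i => if i.val < d - 1
      then Set.Icc (-(1/(2*(d:ℝ)))) (1/(2*(d:ℝ)))
      else Set.Icc (aa i) (aa i + δ/(2*(n:ℝ))) with hIqdef
  have hIqmeas : ∀ i, MeasurableSet (Iq i) := by
    intro i; simp only [hIqdef]
    by_cases h : i.val < d - 1
    · rw [if_pos h]; exact measurableSet_Icc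
    · rw [if_neg h]; exact measurableSet_Icc
  have hb1 : ∀ η ∈ box Iq, ∀ i : Fin n, i.val < d - 1 → |η i| ≤ 1/(2*(d:ℝ)) := by
    intro η hη i hi
    have h0 := hη i
    simp only [hIqdef] at h0; rw [if_pos hi] at h0
    exact abs_le.2 ⟨h0.1, h0.2⟩
  have hb2 : ∀ η ∈ box Iq, r - δ/(2*(n:ℝ)) ≤ η jd ∧ η jd ≤ r := by
    intro η hη
    have h0 := hη jd
    simp only [hIqdef] at h0
    rw [if_neg (show ¬ (jd.val < d-1) by show ¬ (d-1 < d-1); omega)] at h0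
    simp only [haadef] at h0
    rw [if_pos (show jd.val < d by show d-1 < d; omega)] at h0
    exact ⟨h0.1, by have := h0.2; linarith⟩
  have hb3 : ∀ η ∈ box Iq, ∀ i : Fin n, d ≤ i.val → |η i| ≤ δ/(4*(n:ℝ)) := by
    intro η hη i hi
    have h0 := hη i
    simp only [hIqdef] at h0
    rw [if_neg (show ¬ (i.val < d-1) by omega)] at h0
    simp only [haadef] at h0
    rw [if_neg (show ¬ (i.val < d) by omega)] at h0
    have h2n : δ/(2*(n:ℝ)) = 2*(δ/(4*(n:ℝ))) := by ring
    refine abs_le.2 ⟨by linarith [h0.1], by have := h0.2; linarith⟩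
  -- step 6 : points of the box are in the plate, and their images lie in A
  have hmain : ∀ η ∈ box Iq, η ∈ plate K δ ∧ x + O η ∈ A := by
    intro η hη
    have hq1 := hb1 η hη
    have hq2 := hb2 η hη
    have hq3 := hb3 η hη
    have hmask2 : maskLow d η = maskLow (d-1) η + EuclideanSpace.single jd (η jd) := by
      ext i
      have hs : (EuclideanSpace.single jd (η jd) : EuclideanSpace ℝ (Fin n)) i
          = if i = jd then η jd else 0 := EuclideanSpace.single_apply jd (η jd) i
      show (if i.val < d then η i else 0)
        = (if i.val < d - 1 then η i else 0) + (EuclideanSpace.single jd (η jd) : EuclideanSpace ℝ (Fin n)) i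
      rw [hs]
      by_cases h1 : i.val < d - 1
      · have hne : i ≠ jd := by
          intro he
          have hv : i.val = d - 1 := congrArg Fin.val he
          omega
        rw [if_pos (show i.val < d by omega), if_pos h1, if_neg hne, add_zero]
      · by_cases h2 : i.val < d
        · have hij : i = jd := Fin.ext (show i.val = d - 1 by omega)
          rw [if_pos h2, if_neg h1, if_pos hij, zero_add]
          exact congrArg η hij
        · have hne : i ≠ jd := by
            intro he
            have hv : i.val = d - 1 := congrArg Fin.val he
            omega
          rw [if_neg h2, if_neg h1, if_neg hne, add_zero]
    have hnorm1 : ‖maskLow (d-1) η‖ ≤ 1/2 := by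
      have hsq : ‖maskLow (d-1) η‖^2 ≤ (d-1 : ℕ) * (1/(2*(d:ℝ)))^2 := by
        rw [sq_norm_eq]
        have hco : ∀ i : Fin n, maskLow (d-1) η i = if i.val < d-1 then η i else 0 :=
          fun _ => rfl
        simp only [hco]
        exact sum_ite_le (d-1) hd1n (by positivity) hq1
      have hcast : ((d-1 : ℕ) : ℝ) ≤ (d:ℝ) := by exact_mod_cast Nat.sub_le d 1
      have h2 : ((d-1:ℕ):ℝ) * (1/(2*(d:ℝ)))^2 ≤ (1/2)^2 := by
        have hd0 : (0:ℝ) < d := by linarith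
        have e : (1/(2*(d:ℝ)))^2 = 1/(4*(d:ℝ)^2) := by
          rw [div_pow, one_pow]; congr 1; ring
        have e2 : ((1:ℝ)/2)^2 = 1/4 := by norm_num
        rw [e, e2, mul_one_div, div_le_div_iff₀ (by positivity) (by norm_num)]
        nlinarith
      nlinarith [norm_nonneg (maskLow (d-1) η)]
    have hnormjd : |η jd| ≤ 1/2 := by
      refine abs_le.2 ⟨?_, by linarith [hq2.2]⟩
      have := hq2.1
      linarith
    have hmaskd : ‖maskLow d η‖ ≤ 1 := by
      rw [hmask2]
      calc ‖maskLow (d-1) η + EuclideanSpace.single jd (η jd)‖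
          ≤ ‖maskLow (d-1) η‖ + ‖EuclideanSpace.single jd (η jd)‖ := norm_add_le _ _
        _ ≤ 1/2 + 1/2 := by
            refine add_le_add hnorm1 ?_
            rw [EuclideanSpace.norm_single, Real.norm_eq_abs]
            exact hnormjd
        _ = 1 := by norm_num
    have hnorm3 : ‖η - maskLow d η‖ < δ := by
      have hval : ∀ i : Fin n, (η - maskLow d η) i = if i.val < d then 0 else η i := by
        intro i
        show η i - (if i.val < d then η i else 0) = _
        by_cases h : i.val < d
        · rw [if_pos h, if_pos h, sub_self]
        · rw [if_neg h, if_neg h, sub_zero]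
      have hsq : ‖η - maskLow d η‖^2 ≤ (n:ℝ) * (δ/(4*(n:ℝ)))^2 := by
        rw [sq_norm_eq]
        calc ∑ i, ((η - maskLow d η) i)^2 ≤ ∑ _i : Fin n, (δ/(4*(n:ℝ)))^2 := by
              apply Finset.sum_le_sum
              intro i _
              rw [hval i]
              by_cases h : i.val < d
              · rw [if_pos h]; simpa using sq_nonneg (δ/(4*(n:ℝ)))
              · rw [if_neg h]
                have h5 := hq3 i (by omega)
                rw [← sq_abs]
                exact pow_le_pow_left₀ (abs_nonneg _) h5 2
          _ = (n:ℝ) * (δ/(4*(n:ℝ)))^2 := by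
              rw [Finset.sum_const, Finset.card_univ, Fintype.card_fin, nsmul_eq_mul]
      have heq2 : (n:ℝ) * (δ/(4*(n:ℝ)))^2 = δ^2/(16*(n:ℝ)) := by
        field_simp
        ring
      have h2 : (n:ℝ) * (δ/(4*(n:ℝ)))^2 < δ^2 := by
        rw [heq2]
        exact div_lt_self (by positivity) (by linarith)
      nlinarith [norm_nonneg (η - maskLow d η)]
    have hplateη : η ∈ plate K δ := by
      refine ⟨?_, ?_⟩
      · show ‖projE K η‖ ≤ 1
        rw [hKdef, projE_Wsub]; exact hmaskd
      · show ‖projE Kᗮ η‖ < δ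
        rw [hKdef, projE_Wsub_orth]; exact hnorm3
    have hηle : ‖η‖ ≤ 3/2 := by
      have hsum : η = maskLow d η + (η - maskLow d η) := by abel
      calc ‖η‖ = ‖maskLow d η + (η - maskLow d η)‖ := by rw [← hsum]
        _ ≤ ‖maskLow d η‖ + ‖η - maskLow d η‖ := norm_add_le _ _
        _ ≤ 1 + δ := add_le_add hmaskd hnorm3.le
        _ ≤ 3/2 := by linarith
    -- decomposition of O η
    have hηsplit : η = maskLow (d-1) η + EuclideanSpace.single jd (η jd)
        + (η - maskLow d η) := by
      rw [← hmask2]; abel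
    have hOsingle : O (EuclideanSpace.single jd (η jd)) = (η jd) • vv := by
      rw [single_smul_one, _root_.map_smul, hOdef, b.repr_symm_single, hbjd]
    have hOsplit : O η = O (maskLow (d-1) η) + (η jd) • vv + O (η - maskLow d η) := by
      conv_lhs => rw [hηsplit]
      rw [map_add, map_add, hOsingle]
    have hO1Y : O (maskLow (d-1) η) ∈ Y := by
      rw [hO]
      apply sum_mem
      intro i _
      by_cases hi : i.val < d - 1
      · rw [hbi i hi]
        exact smul_mem _ _ (single_mem_Wsub (d-1) hd1n i hi 1)
      · have h0 : maskLow (d-1) η i = 0 := if_neg hi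
        rw [h0, zero_smul]; exact zero_mem _
    have hxOA : x + O η ∈ A := by
      rw [hA]
      refine ⟨?_, ?_⟩
      · calc ‖projE (Wsub n (d-1) hd1n) (x + O η)‖ ≤ ‖x + O η‖ := norm_projE_le _ _
          _ ≤ ‖x‖ + ‖O η‖ := norm_add_le _ _
          _ = ‖x‖ + ‖η‖ := by rw [hOdef, LinearIsometryEquiv.norm_map]
          _ ≤ 1/2 + 3/2 := add_le_add hxb.le hηle
          _ = 2 := by norm_num
      · have hproj : projE Yᗮ (x + O η)
            = (η jd - r) • vv + projE Yᗮ (O (η - maskLow d η)) := by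
          have e1 : projE Yᗮ (x + O η) = projE Yᗮ x + projE Yᗮ (O η) := map_add _ _ _
          have e2 : projE Yᗮ (O η) = projE Yᗮ (O (maskLow (d-1) η))
              + projE Yᗮ ((η jd) • vv) + projE Yᗮ (O (η - maskLow d η)) := by
            rw [hOsplit, map_add, map_add]
          rw [e1, e2, hyv, projE_orth_of_mem _ hO1Y, _root_.map_smul,
            projE_of_mem _ hvmem, ← hyveq]
          module
        show ‖projE (Wsub n (d-1) hd1n)ᗮ (x + O η)‖ < 2*δ
        rw [show (Wsub n (d-1) hd1n) = Y from rfl, hproj]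
        have habs : |η jd - r| ≤ δ/(2*(n:ℝ)) :=
          abs_le.2 ⟨by linarith [hq2.1], by linarith [hq2.2, hδdiv2pos]⟩
        calc ‖(η jd - r) • vv + projE Yᗮ (O (η - maskLow d η))‖
            ≤ ‖(η jd - r) • vv‖ + ‖projE Yᗮ (O (η - maskLow d η))‖ := norm_add_le _ _
          _ ≤ |η jd - r| + ‖η - maskLow d η‖ := by
              refine add_le_add ?_ ?_
              · rw [norm_smul, Real.norm_eq_abs, hvnorm, mul_one]
              · calc ‖projE Yᗮ (O (η - maskLow d η))‖ ≤ ‖O (η - maskLow d η)‖ :=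
                    norm_projE_le _ _
                  _ = ‖η - maskLow d η‖ := by rw [hOdef, LinearIsometryEquiv.norm_map]
          _ < δ/(2*(n:ℝ)) + δ := by
              have := hnorm3
              refine add_lt_add_of_le_of_lt habs this
          _ ≤ 2*δ := by linarith
    exact ⟨hplateη, hxOA⟩
  -- step 7 : volumes
  have hplate_meas := measurableSet_plate (Wsub n d hdn'') δ
  have hOop : MeasurePreserving (⇑(O.symm)) volume volume := O.symm.measurePreserving
  have hplatevol : volume (plate σx δ) = volume (plate K δ) := by
    rw [hσdef, plate_map_eq]
    exact hOop.measure_preimage hplate_meas.nullMeasurableSet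
  have hSvol : volume ((x + ·) '' plate σx δ) = volume (plate K δ) := by
    rw [Set.image_add_left, measure_preimage_add, hplatevol]
  have hplate_box : plate K δ ⊆ box (fun i : Fin n =>
      if i.val < d then Set.Icc (-1:ℝ) 1 else Set.Icc (-δ) δ) := by
    rintro p ⟨hp1, hp2⟩
    rw [show K = Wsub n d hdn'' from rfl, projE_Wsub] at hp1
    rw [show K = Wsub n d hdn'' from rfl, projE_Wsub_orth] at hp2
    intro i
    show p i ∈ (if i.val < d then Set.Icc (-1:ℝ) 1 else Set.Icc (-δ) δ)
    by_cases h : i.val < d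
    · rw [if_pos h]
      have h2 : p i = maskLow d p i := (if_pos h).symm
      have h3 := coord_le_norm (maskLow d p) i
      rw [← h2] at h3
      exact Set.mem_Icc.2 (abs_le.1 (le_trans h3 hp1))
    · rw [if_neg h]
      have h2 : p i = (p - maskLow d p) i := by
        show p i = p i - (if i.val < d then p i else 0)
        rw [if_neg h, sub_zero]
      have h3 := coord_le_norm (p - maskLow d p) i
      rw [← h2] at h3
      exact Set.mem_Icc.2 (abs_le.1 (le_trans h3 hp2.le))
  have hplate_vol : volume (plate K δ)
      ≤ ENNReal.ofReal ((2:ℝ)^d * 2^(n-d) * δ^(n-d)) := by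
    calc volume (plate K δ) ≤ volume (box (fun i : Fin n =>
          if i.val < d then Set.Icc (-1:ℝ) 1 else Set.Icc (-δ) δ)) :=
        measure_mono hplate_box
      _ = ∏ i : Fin n, volume (if i.val < d then Set.Icc (-1:ℝ) 1 else Set.Icc (-δ) δ) := by
          apply volume_box
          intro i
          by_cases h : i.val < d
          · rw [if_pos h]; exact measurableSet_Icc
          · rw [if_neg h]; exact measurableSet_Icc
      _ = ∏ i : Fin n, (if i.val < d then ENNReal.ofReal 2 else ENNReal.ofReal (2*δ)) := by
          apply Finset.prod_congr rfl
          intro i _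
          by_cases h : i.val < d
          · rw [if_pos h, if_pos h, Real.volume_Icc]; congr 1; norm_num
          · rw [if_neg h, if_neg h, Real.volume_Icc]; congr 1; ring
      _ = (ENNReal.ofReal 2)^d * (ENNReal.ofReal (2*δ))^(n-d) := prod_ite_pow _ _ d hdn''
      _ = ENNReal.ofReal ((2:ℝ)^d * 2^(n-d) * δ^(n-d)) := by
          rw [← ENNReal.ofReal_pow (by norm_num), ← ENNReal.ofReal_pow (by positivity),
            ← ENNReal.ofReal_mul (by positivity)]
          congr 1; rw [mul_pow]; ring
  have hQ0vol : volume (box Iq) = ENNReal.ofReal (((1:ℝ)/d)^(d-1)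
      * ((1:ℝ)/(2*(n:ℝ)))^(n-d+1) * δ^(n-d+1)) := by
    rw [volume_box Iq hIqmeas]
    have hfac : ∀ i : Fin n, volume (Iq i) = if i.val < d - 1
        then ENNReal.ofReal (1/(d:ℝ)) else ENNReal.ofReal (δ/(2*(n:ℝ))) := by
      intro i
      simp only [hIqdef]
      by_cases h : i.val < d-1
      · rw [if_pos h, if_pos h, Real.volume_Icc]; congr 1; ring
      · rw [if_neg h, if_neg h, Real.volume_Icc]; congr 1; ring
    calc ∏ i, volume (Iq i)
        = ∏ i : Fin n, (if i.val < d-1 then ENNReal.ofReal (1/(d:ℝ))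
            else ENNReal.ofReal (δ/(2*(n:ℝ)))) := Finset.prod_congr rfl (fun i _ => hfac i)
      _ = (ENNReal.ofReal (1/(d:ℝ)))^(d-1)
            * (ENNReal.ofReal (δ/(2*(n:ℝ))))^(n-(d-1)) := prod_ite_pow _ _ (d-1) hd1n
      _ = ENNReal.ofReal (((1:ℝ)/d)^(d-1) * ((1:ℝ)/(2*(n:ℝ)))^(n-d+1) * δ^(n-d+1)) := by
          rw [← ENNReal.ofReal_pow (by positivity), ← ENNReal.ofReal_pow (by positivity),
            ← ENNReal.ofReal_mul (by positivity)]
          congr 1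
          have hnn : n - (d-1) = n - d + 1 := by omega
          rw [hnn]
          rw [div_pow, div_pow, div_pow, one_pow, one_pow]
          field_simp
          try ring
  have hQ0meas := measurableSet_box Iq hIqmeas
  have hOQ : ⇑O '' (box Iq) = ⇑(O.symm) ⁻¹' (box Iq) := by
    ext q
    constructor
    · rintro ⟨η, hη, rfl⟩
      show O.symm (O η) ∈ box Iq
      rw [LinearIsometryEquiv.symm_apply_apply]; exact hη
    · intro hq
      exact ⟨O.symm q, hq, by rw [LinearIsometryEquiv.apply_symm_apply]⟩
  have hQvol : volume ((x + ·) '' (⇑O '' (box Iq))) = volume (box Iq) := by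
    rw [Set.image_add_left, measure_preimage_add, hOQ]
    exact hOop.measure_preimage hQ0meas.nullMeasurableSet
  have hsub : (x + ·) '' (⇑O '' (box Iq)) ⊆ A ∩ ((x + ·) '' plate σx δ) := by
    rintro _ ⟨_, ⟨η, hη, rfl⟩, rfl⟩
    refine ⟨(hmain η hη).2, ⟨O η, ?_, rfl⟩⟩
    rw [hσdef]
    exact (mem_plate_map_iff O (Wsub n d hdn'') δ η).2 (hmain η hη).1
  have hfint : ∫⁻ y in (x + ·) '' plate σx δ, (A.indicator fun _ => (1:ℝ≥0∞)) y
      = volume (A ∩ ((x + ·) '' plate σx δ)) := by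
    rw [lintegral_indicator hAmeas, setLIntegral_one, Measure.restrict_apply hAmeas]
  have hint : ENNReal.ofReal (((1:ℝ)/d)^(d-1) * ((1:ℝ)/(2*(n:ℝ)))^(n-d+1) * δ^(n-d+1))
      ≤ ∫⁻ y in (x + ·) '' plate σx δ, (A.indicator fun _ => (1:ℝ≥0∞)) y := by
    rw [hfint]
    calc ENNReal.ofReal (((1:ℝ)/d)^(d-1) * ((1:ℝ)/(2*(n:ℝ)))^(n-d+1) * δ^(n-d+1))
        = volume ((x + ·) '' (⇑O '' (box Iq))) := by rw [hQvol, hQ0vol]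
      _ ≤ volume (A ∩ ((x + ·) '' plate σx δ)) := measure_mono hsub
  have hterm : ENNReal.ofReal ((((1:ℝ)/d)^(d-1) * ((1:ℝ)/(2*(n:ℝ)))^(n-d+1)
        / ((2:ℝ)^d * 2^(n-d))) * δ)
      ≤ (volume ((x + ·) '' plate σx δ))⁻¹
        * ∫⁻ y in (x + ·) '' plate σx δ, (A.indicator fun _ => (1:ℝ≥0∞)) y := by
    have h1 : (ENNReal.ofReal ((2:ℝ)^d * 2^(n-d) * δ^(n-d)))⁻¹
        ≤ (volume ((x + ·) '' plate σx δ))⁻¹ := by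
      apply ENNReal.inv_le_inv.2
      rw [hSvol]; exact hplate_vol
    calc ENNReal.ofReal ((((1:ℝ)/d)^(d-1) * ((1:ℝ)/(2*(n:ℝ)))^(n-d+1)
          / ((2:ℝ)^d * 2^(n-d))) * δ)
        = (ENNReal.ofReal ((2:ℝ)^d * 2^(n-d) * δ^(n-d)))⁻¹
          * ENNReal.ofReal (((1:ℝ)/d)^(d-1) * ((1:ℝ)/(2*(n:ℝ)))^(n-d+1) * δ^(n-d+1)) := by
          rw [← ENNReal.ofReal_inv_of_pos (by positivity),
            ← ENNReal.ofReal_mul (by positivity)]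
          congr 1
          rw [pow_succ]
          field_simp
          ring
      _ ≤ (volume ((x + ·) '' plate σx δ))⁻¹
          * ∫⁻ y in (x + ·) '' plate σx δ, (A.indicator fun _ => (1:ℝ≥0∞)) y :=
          mul_le_mul' h1 hint
  refine le_trans hterm ?_
  simp only [nikMax]
  exact le_iSup₂ (f := fun σ _ => (volume ((x + ·) '' plate σ δ))⁻¹
    * ∫⁻ y in (x + ·) '' plate σ δ, (A.indicator fun _ => (1:ℝ≥0∞)) y) σx hσrank


end NikAux


open NikAux in
set_option maxHeartbeats 2000000 in
theorem stmt18 (n d : ℕ) (hd : 1 ≤ d) (hdn : d < n - 1) :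
    ∃ c > 0, ∃ δ₀ > 0, ∀ δ : ℝ, 0 < δ → δ < δ₀ →
      ∃ f : EuclideanSpace ℝ (Fin n) → ℝ≥0∞, Measurable f ∧
        0 < l2N f ∧ l2N f < ⊤ ∧
        ∃ lam : ℝ≥0∞, 0 < lam ∧
          ENNReal.ofReal (c * δ ^ (-(((n : ℝ) - d - 1) / 2))) * l2N f ≤
            lam * volume {x | lam < nikMax d δ f x} ^ ((1 : ℝ) / 2) := by
  have hdn' : d + 1 < n := by omega
  have hdn'' : d ≤ n := by omega
  have hd1n : d - 1 ≤ n := by omega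
  have hn1 : (1:ℝ) ≤ (n:ℝ) := by exact_mod_cast (by omega : 1 ≤ n)
  have hd1 : (1:ℝ) ≤ (d:ℝ) := by exact_mod_cast hd
  have hd0 : (0:ℝ) < (d:ℝ) := by linarith
  have hn0 : (0:ℝ) < (n:ℝ) := by linarith
  set qA : ℝ := (4:ℝ)^(d-1) * 4^(n-d+1) with hqA
  set c5 : ℝ := ((1:ℝ)/d)^(d-1) * ((1:ℝ)/(2*(n:ℝ)))^(n-d+1) / ((2:ℝ)^d * 2^(n-d)) with hc5
  have hqApos : 0 < qA := by rw [hqA]; positivity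
  have hc5pos : 0 < c5 := by
    rw [hc5]
    apply div_pos
    · exact mul_pos (pow_pos (one_div_pos.2 hd0) _)
        (pow_pos (one_div_pos.2 (by linarith)) _)
    · positivity
  set Vb := volume (Metric.ball (0 : EuclideanSpace ℝ (Fin n)) (1/2)) with hVb
  have hVbpos : 0 < Vb := Metric.measure_ball_pos volume _ (by norm_num)
  have hVbfin : Vb < ⊤ := measure_ball_lt_top
  set vb := Vb.toReal with hvb
  have hvbpos : 0 < vb := ENNReal.toReal_pos hVbpos.ne' hVbfin.ne
  have hsqvb : 0 < Real.sqrt vb := Real.sqrt_pos.2 hvbpos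
  have hsqqA : 0 < Real.sqrt qA := Real.sqrt_pos.2 hqApos
  refine ⟨(c5/2) * Real.sqrt vb / Real.sqrt qA,
    div_pos (mul_pos (half_pos hc5pos) hsqvb) hsqqA, 1/(2*(n:ℝ)), by positivity, ?_⟩
  intro δ hδ0 hδ1
  have hδ1' : δ ≤ 1/(2*(n:ℝ)) := hδ1.le
  have hδhalf : δ ≤ 1/2 := by
    refine le_trans hδ1' ?_
    rw [div_le_div_iff₀ (by linarith) (by norm_num)]
    linarith
  set A : Set (EuclideanSpace ℝ (Fin n)) :=
    {p : EuclideanSpace ℝ (Fin n) | ‖projE (Wsub n (d-1) hd1n) p‖ ≤ 2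
      ∧ ‖projE (Wsub n (d-1) hd1n)ᗮ p‖ < 2*δ} with hAdef
  have hAmeas : MeasurableSet A := by
    rw [hAdef, Set.setOf_and]
    exact (measurableSet_le ((projE _).continuous.norm.measurable) measurable_const).inter
      (measurableSet_lt ((projE _).continuous.norm.measurable) measurable_const)
  set f := A.indicator (fun _ => (1:ℝ≥0∞)) with hf
  have hfmeas : Measurable f := measurable_const.indicator hAmeas
  have hint_eq : ∫⁻ x, (f x)^(2:ℝ) = volume A := by
    have hpt : ∀ x, (f x)^(2:ℝ) = f x := by
      intro x
      rw [hf]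
      by_cases hx : x ∈ A
      · rw [Set.indicator_of_mem hx, ENNReal.one_rpow]
      · rw [Set.indicator_of_notMem hx, ENNReal.zero_rpow_of_pos (by norm_num)]
    simp only [hpt]
    rw [hf, lintegral_indicator hAmeas, setLIntegral_one]
  have hl2 : l2N f = (volume A) ^ ((1:ℝ)/2) := by rw [l2N, hint_eq]
  have hAup : volume A ≤ ENNReal.ofReal (qA * δ^(n-d+1)) := by
    have hsub : A ⊆ box (fun i : Fin n =>
        if i.val < d-1 then Set.Icc (-2:ℝ) 2 else Set.Icc (-(2*δ)) (2*δ)) := by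
      rintro p ⟨hp1, hp2⟩
      rw [projE_Wsub] at hp1
      rw [projE_Wsub_orth] at hp2
      intro i
      show p i ∈ (if i.val < d-1 then Set.Icc (-2:ℝ) 2 else Set.Icc (-(2*δ)) (2*δ))
      by_cases h : i.val < d-1
      · rw [if_pos h]
        have h2 : p i = maskLow (d-1) p i := (if_pos h).symm
        have h3 := coord_le_norm (maskLow (d-1) p) i
        rw [← h2] at h3
        exact Set.mem_Icc.2 (abs_le.1 (le_trans h3 hp1))
      · rw [if_neg h]
        have h2 : p i = (p - maskLow (d-1) p) i := by
          show p i = p i - (if i.val < d-1 then p i else 0)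
          rw [if_neg h, sub_zero]
        have h3 := coord_le_norm (p - maskLow (d-1) p) i
        rw [← h2] at h3
        exact Set.mem_Icc.2 (abs_le.1 (le_trans h3 hp2.le))
    calc volume A ≤ volume (box (fun i : Fin n =>
          if i.val < d-1 then Set.Icc (-2:ℝ) 2 else Set.Icc (-(2*δ)) (2*δ))) :=
        measure_mono hsub
      _ = ∏ i : Fin n, volume (if i.val < d-1 then Set.Icc (-2:ℝ) 2
            else Set.Icc (-(2*δ)) (2*δ)) := by
          apply volume_box
          intro i
          by_cases h : i.val < d-1
          · rw [if_pos h]; exact measurableSet_Icc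
          · rw [if_neg h]; exact measurableSet_Icc
      _ = ∏ i : Fin n, (if i.val < d-1 then ENNReal.ofReal 4 else ENNReal.ofReal (4*δ)) := by
          apply Finset.prod_congr rfl
          intro i _
          by_cases h : i.val < d-1
          · rw [if_pos h, if_pos h, Real.volume_Icc]; congr 1; norm_num
          · rw [if_neg h, if_neg h, Real.volume_Icc]; congr 1; ring
      _ = (ENNReal.ofReal 4)^(d-1) * (ENNReal.ofReal (4*δ))^(n-(d-1)) :=
          prod_ite_pow _ _ (d-1) hd1n
      _ = ENNReal.ofReal (qA * δ^(n-d+1)) := by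
          rw [← ENNReal.ofReal_pow (by norm_num), ← ENNReal.ofReal_pow (by positivity),
            ← ENNReal.ofReal_mul (by positivity)]
          congr 1
          have hnn : n - (d-1) = n - d + 1 := by omega
          rw [hnn, hqA, mul_pow]
          ring
  have hAfin : volume A < ⊤ := lt_of_le_of_lt hAup ENNReal.ofReal_lt_top
  have hAlow : 0 < volume A := by
    have hball : Metric.ball (0 : EuclideanSpace ℝ (Fin n)) (2*δ) ⊆ A := by
      intro p hp
      rw [mem_ball_zero_iff] at hp
      refine ⟨?_, ?_⟩
      · calc ‖projE (Wsub n (d-1) hd1n) p‖ ≤ ‖p‖ := norm_projE_le _ _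
          _ ≤ 2 := by linarith
      · exact lt_of_le_of_lt (norm_projE_le _ _) hp
    exact lt_of_lt_of_le (Metric.measure_ball_pos volume _ (by positivity))
      (measure_mono hball)
  have hl2pos : 0 < l2N f := by
    rw [hl2]
    exact ENNReal.rpow_pos hAlow hAfin.ne
  have hl2fin : l2N f < ⊤ := by
    rw [hl2]
    exact ENNReal.rpow_lt_top_of_nonneg (by norm_num) hAfin.ne
  refine ⟨f, hfmeas, hl2pos, hl2fin, ENNReal.ofReal (c5*δ/2),
    ENNReal.ofReal_pos.2 (by positivity), ?_⟩
  -- the superlevel set contains the ball minus the subspace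
  have hE : Metric.ball (0 : EuclideanSpace ℝ (Fin n)) (1/2)
        \ ((Wsub n (d-1) hd1n : Submodule ℝ (EuclideanSpace ℝ (Fin n)))
            : Set (EuclideanSpace ℝ (Fin n)))
      ⊆ {x | ENNReal.ofReal (c5*δ/2) < nikMax d δ f x} := by
    rintro x ⟨hx1, hx2⟩
    have hkey := key n d hd hdn' hd1n δ hδ0 hδ1' A hAdef hAmeas x
      (mem_ball_zero_iff.1 hx1) hx2
    rw [← hc5] at hkey
    refine lt_of_lt_of_le ?_ hkey
    rw [ENNReal.ofReal_lt_ofReal_iff (by positivity)]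
    nlinarith
  have hYnull : volume ((Wsub n (d-1) hd1n : Submodule ℝ (EuclideanSpace ℝ (Fin n)))
      : Set (EuclideanSpace ℝ (Fin n))) = 0 := by
    apply Measure.addHaar_submodule
    intro htop
    have h1 : Module.finrank ℝ (Wsub n (d-1) hd1n) = d - 1 := finrank_Wsub (d-1) hd1n
    rw [htop, finrank_top, finrank_euclideanSpace_fin] at h1
    omega
  have hlevel : Vb ≤ volume {x | ENNReal.ofReal (c5*δ/2) < nikMax d δ f x} := by
    calc Vb = volume (Metric.ball (0 : EuclideanSpace ℝ (Fin n)) (1/2)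
          \ ((Wsub n (d-1) hd1n : Submodule ℝ (EuclideanSpace ℝ (Fin n)))
              : Set (EuclideanSpace ℝ (Fin n)))) := (measure_diff_null hYnull).symm
      _ ≤ _ := measure_mono hE
  -- final computation
  have hk : ((n - d + 1 : ℕ) : ℝ) = (n:ℝ) - d + 1 := by
    rw [Nat.cast_add, Nat.cast_sub hdn'', Nat.cast_one]
  have hs1 : Real.sqrt (qA * δ^(n-d+1))
      = Real.sqrt qA * (δ ^ ((((n:ℝ)-d+1))*((1:ℝ)/2))) := by
    rw [Real.sqrt_mul hqApos.le]
    congr 1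
    rw [← Real.rpow_natCast δ (n-d+1), hk, Real.sqrt_eq_rpow, ← Real.rpow_mul hδ0.le]
  have hδexp : δ ^ (-(((n:ℝ) - d - 1) / 2)) * δ ^ ((((n:ℝ)-d+1))*((1:ℝ)/2)) = δ := by
    rw [← Real.rpow_add hδ0]
    have he : -(((n:ℝ) - d - 1) / 2) + (((n:ℝ)-d+1))*((1:ℝ)/2) = 1 := by ring
    rw [he, Real.rpow_one]
  calc ENNReal.ofReal ((c5/2) * Real.sqrt vb / Real.sqrt qA
          * δ ^ (-(((n : ℝ) - d - 1) / 2))) * l2N f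
      ≤ ENNReal.ofReal ((c5/2) * Real.sqrt vb / Real.sqrt qA
          * δ ^ (-(((n : ℝ) - d - 1) / 2)))
        * ENNReal.ofReal (Real.sqrt (qA * δ^(n-d+1))) := by
        refine _root_.mul_le_mul_right ?_ _
        rw [hl2]
        calc (volume A) ^ ((1:ℝ)/2)
            ≤ (ENNReal.ofReal (qA * δ^(n-d+1))) ^ ((1:ℝ)/2) :=
              ENNReal.rpow_le_rpow hAup (by norm_num)
          _ = ENNReal.ofReal (Real.sqrt (qA * δ^(n-d+1))) := by
              rw [Real.sqrt_eq_rpow, ← ENNReal.ofReal_rpow_of_pos (by positivity)]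
    _ = ENNReal.ofReal ((c5/2) * Real.sqrt vb / Real.sqrt qA
          * δ ^ (-(((n : ℝ) - d - 1) / 2)) * Real.sqrt (qA * δ^(n-d+1))) := by
        rw [← ENNReal.ofReal_mul (by positivity)]
    _ = ENNReal.ofReal (c5*δ/2 * Real.sqrt vb) := by
        congr 1
        rw [hs1]
        have hstep : (c5/2) * Real.sqrt vb / Real.sqrt qA
            * δ ^ (-(((n : ℝ) - d - 1) / 2))
            * (Real.sqrt qA * (δ ^ ((((n:ℝ)-d+1))*((1:ℝ)/2))))
            = (c5/2) * Real.sqrt vb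
              * (δ ^ (-(((n:ℝ) - d - 1) / 2)) * δ ^ ((((n:ℝ)-d+1))*((1:ℝ)/2))) := by
          field_simp
        rw [hstep, hδexp]
        ring
    _ = ENNReal.ofReal (c5*δ/2) * ENNReal.ofReal (Real.sqrt vb) := by
        rw [← ENNReal.ofReal_mul (by positivity)]
    _ ≤ ENNReal.ofReal (c5*δ/2)
        * volume {x | ENNReal.ofReal (c5*δ/2) < nikMax d δ f x} ^ ((1:ℝ)/2) := by
        refine _root_.mul_le_mul_right ?_ _
        have hvbeq : ENNReal.ofReal (Real.sqrt vb) = Vb ^ ((1:ℝ)/2) := by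
          rw [Real.sqrt_eq_rpow, ← ENNReal.ofReal_rpow_of_pos hvbpos,
            hvb, ENNReal.ofReal_toReal hVbfin.ne]
        rw [hvbeq]
        exact ENNReal.rpow_le_rpow hlevel (by norm_num)
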